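/- arXiv:math/0508570 — 2 statements merged into one kernel-verified Lean document; each statement's English description precedes it below -/
import Mathlib

section
/- For all integers n ≥ 1, R_{0,2n} = (n!)² and R_{n,2n} = (n!)². -/
namespace DescentParity

/-- Number of descent positions i (1-indexed adjacent pairs) of a permutation of {1,…,m}
    whose first (larger) entry is even. Entries of `Fin m` represent values via `(·:ℕ)+1`. -/
def desBegE (m : ℕ) (σ : Equiv.Perm (Fin m)) : ℕ :=
  (Finset.univ.filter (fun p : Fin m × Fin m =>
    (p.2 : ℕ) = (p.1 : ℕ) + 1 ∧ σ p.2 < σ p.1 ∧ Even ((σ p.1 : ℕ) + 1))).card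

def desEndE (m : ℕ) (σ : Equiv.Perm (Fin m)) : ℕ :=
  (Finset.univ.filter (fun p : Fin m × Fin m =>
    (p.2 : ℕ) = (p.1 : ℕ) + 1 ∧ σ p.2 < σ p.1 ∧ Even ((σ p.2 : ℕ) + 1))).card

def desBegO (m : ℕ) (σ : Equiv.Perm (Fin m)) : ℕ :=
  (Finset.univ.filter (fun p : Fin m × Fin m =>
    (p.2 : ℕ) = (p.1 : ℕ) + 1 ∧ σ p.2 < σ p.1 ∧ Odd ((σ p.1 : ℕ) + 1))).card

def desEndO (m : ℕ) (σ : Equiv.Perm (Fin m)) : ℕ :=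
  (Finset.univ.filter (fun p : Fin m × Fin m =>
    (p.2 : ℕ) = (p.1 : ℕ) + 1 ∧ σ p.2 < σ p.1 ∧ Odd ((σ p.2 : ℕ) + 1))).card

/-- The first entry σ₁ of the permutation is even. -/
def firstEven (m : ℕ) (σ : Equiv.Perm (Fin m)) : Prop :=
  ∃ i : Fin m, (i : ℕ) = 0 ∧ Even ((σ i : ℕ) + 1)

def firstOdd (m : ℕ) (σ : Equiv.Perm (Fin m)) : Prop :=
  ∃ i : Fin m, (i : ℕ) = 0 ∧ Odd ((σ i : ℕ) + 1)

instance (m : ℕ) (σ : Equiv.Perm (Fin m)) : Decidable (firstEven m σ) := by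
  unfold firstEven; infer_instance

instance (m : ℕ) (σ : Equiv.Perm (Fin m)) : Decidable (firstOdd m σ) := by
  unfold firstOdd; infer_instance

def R (k m : ℕ) : ℕ :=
  (Finset.univ.filter (fun σ : Equiv.Perm (Fin m) => desBegE m σ = k)).card

def M (k m : ℕ) : ℕ :=
  (Finset.univ.filter (fun σ : Equiv.Perm (Fin m) => desBegO m σ = k)).card

def P0 (k m : ℕ) : ℕ :=
  (Finset.univ.filter (fun σ : Equiv.Perm (Fin m) => firstOdd m σ ∧ desEndE m σ = k)).card

def P1 (k m : ℕ) : ℕ :=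
  (Finset.univ.filter (fun σ : Equiv.Perm (Fin m) => firstEven m σ ∧ desEndE m σ = k)).card

def Q0 (k m : ℕ) : ℕ :=
  (Finset.univ.filter (fun σ : Equiv.Perm (Fin m) => firstEven m σ ∧ desEndO m σ = k)).card

def Q1 (k m : ℕ) : ℕ :=
  (Finset.univ.filter (fun σ : Equiv.Perm (Fin m) => firstOdd m σ ∧ desEndO m σ = k)).card

/-!
Inserting the largest value `m + 1` into a permutation of `{1, …, m}` at one of its `m + 1`
slots is a bijection onto the permutations of `{1, …, m + 1}`. The new entry starts an even
descent exactly when `m + 1` is even and it is not placed last, and it destroys an even descent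
exactly when it is placed inside one. Counting slots gives
`R (k + 1) (m + 1) = (k + 2) R (k + 1) m + (m - k) R k m` for even `m + 1` and
`R k (m + 1) = (m + 1 - k) R k m + (k + 1) R (k + 1) m` for odd `m + 1`; these recurrences are
solved by `R k (2n) = (n! C(n, k))²` and `R k (2n + 1) = n! (n + 1)! C(n, k) C(n + 1, k + 1)`.
-/

open Finset

section Insertion

variable {m : ℕ}

-- The value `Fin.last m` is placed at position `p`; the entries of `σ` fill the other positions.
def insertMax (σ : Equiv.Perm (Fin m)) (p : Fin (m + 1)) : Equiv.Perm (Fin (m + 1)) :=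
  ((finSuccEquiv' p).trans (Equiv.optionCongr σ)).trans finSuccEquivLast.symm

@[simp] lemma insertMax_apply_self (σ : Equiv.Perm (Fin m)) (p : Fin (m + 1)) :
    insertMax σ p p = Fin.last m := by
  simp [insertMax, finSuccEquiv'_at]

@[simp] lemma insertMax_apply_succAbove (σ : Equiv.Perm (Fin m)) (p : Fin (m + 1)) (i : Fin m) :
    insertMax σ p (p.succAbove i) = (σ i).castSucc := by
  simp [insertMax, finSuccEquiv'_succAbove]

lemma insertMax_bijective :
    Function.Bijective fun q : Equiv.Perm (Fin m) × Fin (m + 1) => insertMax q.1 q.2 := by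
  refine (Fintype.bijective_iff_injective_and_card _).2
    ⟨?_, by simp [Fintype.card_perm, Nat.factorial_succ, mul_comm]⟩
  rintro ⟨σ, p⟩ ⟨σ', p'⟩ h
  dsimp only at h
  obtain rfl : p = p' := by
    apply (insertMax σ' p').injective
    rw [← h, insertMax_apply_self, h, insertMax_apply_self]
  refine Prod.ext (Equiv.ext fun i => Fin.castSucc_injective m ?_) rfl
  rw [← insertMax_apply_succAbove, h, insertMax_apply_succAbove]

def evenDescents (σ : Equiv.Perm (Fin m)) : Finset (Fin m) :=
  {i | ∃ h : (i : ℕ) + 1 < m, σ ⟨i + 1, h⟩ < σ i ∧ Even ((σ i : ℕ) + 1)}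

lemma desBegE_eq_card_evenDescents (σ : Equiv.Perm (Fin m)) :
    desBegE m σ = #(evenDescents σ) := by
  refine card_nbij Prod.fst ?_ ?_ ?_
  · rintro ⟨i, j⟩ hij
    simp only [evenDescents, coe_filter, mem_univ, true_and, Set.mem_ofPred_eq] at hij ⊢
    obtain ⟨hj, hlt, hev⟩ := hij
    have hi : (i : ℕ) + 1 < m := hj ▸ j.isLt
    exact ⟨hi, by rwa [show (⟨i + 1, hi⟩ : Fin m) = j from Fin.ext hj.symm], hev⟩
  · rintro ⟨i, j⟩ hij ⟨i', j'⟩ hij' (rfl : i = i')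
    simp only [coe_filter, mem_univ, true_and, Set.mem_ofPred_eq] at hij hij'
    exact Prod.ext rfl (Fin.ext (hij.1.trans hij'.1.symm))
  · intro i hi
    simp only [evenDescents, coe_filter, mem_univ, true_and, Set.mem_ofPred_eq] at hi
    obtain ⟨h, hlt, hev⟩ := hi
    exact ⟨(i, ⟨i + 1, h⟩), by simp [hlt, hev], rfl⟩

lemma val_succAbove_eq_ite {n : ℕ} (p : Fin (n + 1)) (i : Fin n) :
    (p.succAbove i : ℕ) = if (i : ℕ) < p then (i : ℕ) else (i : ℕ) + 1 := by
  unfold Fin.succAbove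
  split_ifs <;> simp_all [Fin.lt_def]

lemma succAbove_mem_evenDescents_insertMax_iff (σ : Equiv.Perm (Fin m)) (p : Fin (m + 1))
    (i : Fin m) :
    p.succAbove i ∈ evenDescents (insertMax σ p) ↔ i ∈ evenDescents σ ∧ i.succ ≠ p := by
  have hval := val_succAbove_eq_ite p i
  by_cases hp : i.succ = p
  · subst hp
    have hnext : (⟨i + 1, i.succ.isLt⟩ : Fin (m + 1)) = i.succ := rfl
    simp only [evenDescents, mem_filter, mem_univ, true_and, ne_eq, not_true_eq_false, and_false,
      iff_false, not_exists, not_and, Fin.succAbove_succ_self, Fin.val_castSucc]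
    intro _ hlt
    rw [hnext, insertMax_apply_self] at hlt
    exact absurd hlt (Fin.le_last _).not_gt
  · have hp' : (i : ℕ) + 1 ≠ p := fun h => hp (Fin.ext h)
    have hnext (h : (i : ℕ) + 1 < m) :
        p.succAbove ⟨i + 1, h⟩ = ⟨p.succAbove i + 1, by split_ifs at hval <;> omega⟩ := by
      ext; rw [val_succAbove_eq_ite]; split_ifs at hval ⊢ <;> simp only at * <;> omega
    simp only [evenDescents, mem_filter, mem_univ, true_and, insertMax_apply_succAbove,
      Fin.val_castSucc, hp, ne_eq, not_false_eq_true, and_true]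
    constructor
    · rintro ⟨h, hlt, hev⟩
      have h' : (i : ℕ) + 1 < m := by split_ifs at hval <;> omega
      refine ⟨h', ?_, hev⟩
      rwa [← hnext h', insertMax_apply_succAbove, Fin.castSucc_lt_castSucc_iff] at hlt
    · rintro ⟨h', hlt, hev⟩
      refine ⟨by split_ifs at hval <;> omega, ?_, hev⟩
      rwa [← hnext h', insertMax_apply_succAbove, Fin.castSucc_lt_castSucc_iff]

lemma self_mem_evenDescents_insertMax_iff (σ : Equiv.Perm (Fin m)) (p : Fin (m + 1)) :
    p ∈ evenDescents (insertMax σ p) ↔ p ≠ Fin.last m ∧ Even (m + 1) := by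
  simp only [evenDescents, mem_filter, mem_univ, true_and, insertMax_apply_self, Fin.val_last,
    Fin.ne_iff_vne]
  constructor
  · rintro ⟨h, -, hev⟩
    exact ⟨by omega, hev⟩
  · rintro ⟨hp, hev⟩
    have h : (p : ℕ) + 1 < m + 1 := by omega
    refine ⟨h, ?_, hev⟩
    obtain ⟨i, hi⟩ :=
      Fin.exists_succAbove_eq (x := ⟨p + 1, h⟩) (y := p) (Fin.ne_of_gt (Nat.lt_succ_self _))
    rw [← hi, insertMax_apply_succAbove]
    exact Fin.castSucc_lt_last _

lemma card_evenDescents_insertMax (σ : Equiv.Perm (Fin m)) (p : Fin (m + 1)) :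
    #(evenDescents (insertMax σ p))
      = (if p ≠ Fin.last m ∧ Even (m + 1) then 1 else 0)
        + #{i ∈ evenDescents σ | i.succ ≠ p} := by
  rw [card_eq_sum_ite (subset_univ _), Fin.sum_univ_succAbove _ p]
  simp only [self_mem_evenDescents_insertMax_iff, succAbove_mem_evenDescents_insertMax_iff,
    sum_boole, Nat.cast_id, filter_and, filter_mem_eq_inter, univ_inter, inter_filter, inter_univ]

lemma card_filter_succ_ne_add_ite (D : Finset (Fin m)) (p : Fin (m + 1)) :
    #{i ∈ D | i.succ ≠ p} + (if p ∈ D.map (Fin.succEmb m) then 1 else 0) = #D := by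
  have : {i ∈ D | i.succ ≠ p}.map (Fin.succEmb m) = (D.map (Fin.succEmb m)).erase p := by
    rw [← filter_ne', filter_map]; rfl
  rw [← card_map (Fin.succEmb m), this, ← card_map (Fin.succEmb m) (s := D)]
  split_ifs with h
  · exact card_erase_add_one h
  · rw [erase_eq_of_notMem h, add_zero]

-- Slot `i.succ` lies between positions `i` and `i + 1`.
def splittingSlots (σ : Equiv.Perm (Fin m)) : Finset (Fin (m + 1)) :=
  (evenDescents σ).map (Fin.succEmb m)

lemma card_splittingSlots (σ : Equiv.Perm (Fin m)) : #(splittingSlots σ) = desBegE m σ := by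
  rw [splittingSlots, card_map, desBegE_eq_card_evenDescents]

lemma last_notMem_splittingSlots (σ : Equiv.Perm (Fin m)) : Fin.last m ∉ splittingSlots σ := by
  simp only [splittingSlots, mem_map, Fin.coe_succEmb, not_exists, not_and, Fin.ext_iff,
    Fin.val_succ, Fin.val_last]
  intro i hi
  obtain ⟨h, -⟩ := (mem_filter.1 hi).2
  omega

lemma desBegE_insertMax_add_ite (σ : Equiv.Perm (Fin m)) (p : Fin (m + 1)) :
    desBegE (m + 1) (insertMax σ p) + (if p ∈ splittingSlots σ then 1 else 0)
      = desBegE m σ + (if p ≠ Fin.last m ∧ Even (m + 1) then 1 else 0) := by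
  rw [desBegE_eq_card_evenDescents, desBegE_eq_card_evenDescents, card_evenDescents_insertMax,
    ← card_filter_succ_ne_add_ite (evenDescents σ) p, splittingSlots]
  ring

lemma desBegE_insertMax_of_even (hm : Even (m + 1)) (σ : Equiv.Perm (Fin m)) (p : Fin (m + 1)) :
    desBegE (m + 1) (insertMax σ p)
      = if p ∈ insert (Fin.last m) (splittingSlots σ) then desBegE m σ
        else desBegE m σ + 1 := by
  have h := desBegE_insertMax_add_ite σ p
  have hlast : p ∈ splittingSlots σ → p ≠ Fin.last m := by
    rintro hp rfl; exact last_notMem_splittingSlots σ hp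
  simp only [mem_insert, hm, and_true] at h ⊢
  split_ifs at h ⊢ <;> simp_all

lemma desBegE_insertMax_of_not_even (hm : ¬Even (m + 1)) (σ : Equiv.Perm (Fin m))
    (p : Fin (m + 1)) :
    desBegE (m + 1) (insertMax σ p)
      = if p ∈ splittingSlots σ then desBegE m σ - 1 else desBegE m σ := by
  have h := desBegE_insertMax_add_ite σ p
  simp only [hm, and_false, if_false, add_zero] at h
  split_ifs at h ⊢ <;> omega

lemma card_filter_ite_mem_eq {α : Type*} [Fintype α] [DecidableEq α] (T : Finset α)
    (a b k : ℕ) :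
    #{x | (if x ∈ T then a else b) = k}
      = (if a = k then #T else 0) + (if b = k then Fintype.card α - #T else 0) := by
  have hsplit :
      #{x | (if x ∈ T then a else b) = k} = #{x ∈ T | a = k} + #{x ∈ Tᶜ | b = k} := by
    rw [← card_union_of_disjoint
      (disjoint_compl_right.mono (filter_subset _ _) (filter_subset _ _))]
    congr 1; ext x
    by_cases hx : x ∈ T <;> simp only [mem_filter, mem_union, mem_univ, true_and, mem_compl, hx,
      ite_true, ite_false, not_true_eq_false, not_false_eq_true, false_and, or_false, false_or]
  rw [hsplit, filter_const, filter_const]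
  split_ifs <;> simp [card_compl]

lemma card_filter_desBegE_insertMax_of_even (hm : Even (m + 1)) (σ : Equiv.Perm (Fin m))
    (k : ℕ) :
    #{p | desBegE (m + 1) (insertMax σ p) = k}
      = (if desBegE m σ = k then k + 1 else 0)
        + (if desBegE m σ + 1 = k then m + 1 - k else 0) := by
  simp_rw [desBegE_insertMax_of_even hm]
  rw [card_filter_ite_mem_eq, card_insert_of_notMem (last_notMem_splittingSlots σ),
    card_splittingSlots, Fintype.card_fin]
  split_ifs <;> omega

lemma card_filter_desBegE_insertMax_of_not_even (hm : ¬Even (m + 1)) (σ : Equiv.Perm (Fin m))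
    (k : ℕ) :
    #{p | desBegE (m + 1) (insertMax σ p) = k}
      = (if desBegE m σ = k then m + 1 - k else 0)
        + (if desBegE m σ = k + 1 then k + 1 else 0) := by
  simp_rw [desBegE_insertMax_of_not_even hm]
  rw [card_filter_ite_mem_eq, card_splittingSlots, Fintype.card_fin]
  split_ifs <;> omega

lemma R_succ_eq_sum (k : ℕ) :
    R k (m + 1) = ∑ σ : Equiv.Perm (Fin m), #{p | desBegE (m + 1) (insertMax σ p) = k} := by
  rw [R, card_filter,
    ← insertMax_bijective.sum_comp (fun τ => if desBegE (m + 1) τ = k then 1 else 0),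
    Fintype.sum_prod_type]
  simp only [card_filter]

lemma sum_ite_desBegE_eq (k c : ℕ) :
    ∑ σ : Equiv.Perm (Fin m), (if desBegE m σ = k then c else 0) = c * R k m := by
  rw [sum_ite, sum_const, sum_const_zero, add_zero, smul_eq_mul, R, mul_comm]

lemma R_zero_succ_of_even (hm : Even (m + 1)) : R 0 (m + 1) = R 0 m := by
  simp only [R_succ_eq_sum, card_filter_desBegE_insertMax_of_even hm, Nat.add_one_ne_zero,
    if_false, add_zero, sum_ite_desBegE_eq, zero_add, one_mul]

lemma R_succ_succ_of_even (hm : Even (m + 1)) (k : ℕ) :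
    R (k + 1) (m + 1) = (k + 2) * R (k + 1) m + (m - k) * R k m := by
  simp only [R_succ_eq_sum, card_filter_desBegE_insertMax_of_even hm, Nat.add_right_cancel_iff,
    sum_add_distrib, sum_ite_desBegE_eq, Nat.add_sub_add_right]

lemma R_succ_of_not_even (hm : ¬Even (m + 1)) (k : ℕ) :
    R k (m + 1) = (m + 1 - k) * R k m + (k + 1) * R (k + 1) m := by
  simp only [R_succ_eq_sum, card_filter_desBegE_insertMax_of_not_even hm, sum_add_distrib,
    sum_ite_desBegE_eq]

lemma R_zero_right (k : ℕ) : R k 0 = if k = 0 then 1 else 0 := by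
  have hd (σ : Equiv.Perm (Fin 0)) : desBegE 0 σ = 0 := by simp [desBegE]
  simp only [R, hd]
  split_ifs with hk <;> simp [hk, eq_comm]

end Insertion

lemma succ_mul_choose_mul_choose_succ (n k : ℕ) :
    (n + 1) * (n.choose k * (n + 1).choose (k + 1))
      = (2 * n + 1 - k) * n.choose k ^ 2 + (k + 1) * n.choose (k + 1) ^ 2 := by
  rcases le_or_gt k n with hk | hk
  · obtain ⟨d, rfl⟩ := Nat.exists_eq_add_of_le hk
    have h := Nat.choose_succ_right_eq (k + d) k
    rw [Nat.add_sub_cancel_left] at h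
    rw [Nat.choose_succ_succ', show 2 * (k + d) + 1 - k = k + 1 + 2 * d by omega]
    zify at h ⊢
    linear_combination ((k + d).choose k - (k + d).choose (k + 1) : ℤ) * h
  · simp [Nat.choose_eq_zero_of_lt hk, Nat.choose_eq_zero_of_lt (hk.trans (lt_add_one k))]

lemma succ_mul_choose_succ_sq (n k : ℕ) :
    (n + 1) * (n + 1).choose (k + 1) ^ 2
      = (k + 2) * (n.choose (k + 1) * (n + 1).choose (k + 2))
        + (2 * n + 1 - k) * (n.choose k * (n + 1).choose (k + 1)) := by
  rcases le_or_gt k n with hk | hk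
  · obtain ⟨d, rfl⟩ := Nat.exists_eq_add_of_le hk
    have h := Nat.choose_succ_right_eq (k + d) k
    have h' := Nat.choose_succ_right_eq (k + d + 1) (k + 1)
    rw [Nat.add_sub_cancel_left] at h
    rw [show k + d + 1 - (k + 1) = d by omega] at h'
    rw [show 2 * (k + d) + 1 - k = k + 1 + 2 * d by omega]
    rw [Nat.choose_succ_succ' (k + d) k] at h' ⊢
    zify at h h' ⊢
    linear_combination (-((k + d).choose (k + 1) : ℤ)) * h'
      + ((k + d).choose k + (k + d).choose (k + 1) : ℤ) * h
  · simp [Nat.choose_eq_zero_of_lt hk, Nat.choose_eq_zero_of_lt (hk.trans (lt_add_one k)),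
      Nat.choose_eq_zero_of_lt (Nat.add_lt_add_right hk 1)]

lemma R_two_mul_add_one_of_R_two_mul {n : ℕ}
    (h : ∀ k, R k (2 * n) = (n.factorial * n.choose k) ^ 2) (k : ℕ) :
    R k (2 * n + 1)
      = n.factorial * (n + 1).factorial * (n.choose k * (n + 1).choose (k + 1)) := by
  rw [R_succ_of_not_even (by simp [parity_simps]) k, h, h, Nat.factorial_succ n]
  linear_combination n.factorial ^ 2 * (succ_mul_choose_mul_choose_succ n k).symm

lemma R_two_mul_add_two_of_R_two_mul_add_one {n : ℕ}
    (h : ∀ k, R k (2 * n + 1)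
      = n.factorial * (n + 1).factorial * (n.choose k * (n + 1).choose (k + 1))) (k : ℕ) :
    R k (2 * (n + 1)) = ((n + 1).factorial * (n + 1).choose k) ^ 2 := by
  have hm : Even (2 * n + 1 + 1) := ⟨n + 1, by ring⟩
  rw [show 2 * (n + 1) = 2 * n + 1 + 1 by ring]
  rcases k with _ | k
  · rw [R_zero_succ_of_even hm, h]
    rw [Nat.choose_zero_right, Nat.choose_zero_right, zero_add, Nat.choose_one_right,
      Nat.factorial_succ n]
    ring
  · rw [R_succ_succ_of_even hm, h, h, Nat.factorial_succ n]
    linear_combination n.factorial ^ 2 * (n + 1) * (succ_mul_choose_succ_sq n k).symm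

theorem R_two_mul (n k : ℕ) : R k (2 * n) = (n.factorial * n.choose k) ^ 2 := by
  induction n generalizing k with
  | zero => rcases k with _ | k <;> simp [R_zero_right]
  | succ n ih => exact R_two_mul_add_two_of_R_two_mul_add_one (R_two_mul_add_one_of_R_two_mul ih) k

theorem stmt_2_general (n : ℕ) :
    R 0 (2*n) = (Nat.factorial n)^2 ∧ R n (2*n) = (Nat.factorial n)^2 := by
  simp [R_two_mul]

theorem stmt_2 (n : ℕ) (hn : 1 ≤ n) :
    R 0 (2*n) = (Nat.factorial n)^2 ∧ R n (2*n) = (Nat.factorial n)^2 :=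
  stmt_2_general n

end DescentParity
end

section
/- For all integers n ≥ 1: P_{0,0,2n} = (n!)², P_{1,0,2n} = n·(n!)², P_{0,0,2n+1} = n!·(n+1)!, and P_{1,0,2n+1} = n·n!·(n+1)!. -/
namespace DescentParity

open Equiv Finset

section Aux

variable {m : ℕ}

/-- Insert the value `Fin.last m` at position `j`, other values shifted via `castSucc`. -/
def ins (j : Fin (m+1)) (σ : Perm (Fin m)) : Perm (Fin (m+1)) :=
  (finSuccEquiv' j).trans ((σ.optionCongr).trans finSuccEquivLast.symm)

lemma ins_at (j : Fin (m+1)) (σ : Perm (Fin m)) : ins j σ j = Fin.last m := by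
  simp [ins, finSuccEquiv'_at, Equiv.symm_apply_eq, finSuccEquivLast_last]

lemma ins_succAbove (j : Fin (m+1)) (σ : Perm (Fin m)) (i : Fin m) :
    ins j σ (j.succAbove i) = (σ i).castSucc := by
  simp [ins, finSuccEquiv'_succAbove, Equiv.symm_apply_eq, finSuccEquivLast_castSucc]

lemma ins_injective : Function.Injective (fun p : Fin (m+1) × Perm (Fin m) => ins p.1 p.2) := by
  rintro ⟨j, σ⟩ ⟨j', σ'⟩ h
  simp only at h
  have hj : j = j' := by
    by_contra hne
    obtain ⟨i, hi⟩ := Fin.exists_succAbove_eq hne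
    have h1 : ins j σ j = Fin.last m := ins_at j σ
    have h2 : ins j' σ' j = (σ' i).castSucc := by rw [← hi]; exact ins_succAbove j' σ' i
    rw [h, h2] at h1
    exact absurd h1 (Fin.castSucc_lt_last (σ' i)).ne
  subst hj
  have hσ : σ = σ' := by
    ext i
    have := congrArg (fun π : Perm (Fin (m+1)) => π (j.succAbove i)) h
    simp only [ins_succAbove] at this
    exact congrArg Fin.val (Fin.castSucc_injective _ this)
  rw [hσ]

lemma ins_surjective : Function.Surjective (fun p : Fin (m+1) × Perm (Fin m) => ins p.1 p.2) := by
  intro π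
  set j := π.symm (Fin.last m) with hj
  have hπj : π j = Fin.last m := π.apply_symm_apply _
  set E : Option (Fin m) ≃ Option (Fin m) :=
    ((finSuccEquiv' j).symm.trans (π.trans finSuccEquivLast)) with hE
  have hEnone : E none = none := by
    simp [hE, hπj, finSuccEquivLast_last]
  refine ⟨⟨j, E.removeNone⟩, ?_⟩
  simp only
  ext x
  rcases eq_or_ne x j with rfl | hx
  · rw [ins_at, hπj]
  · obtain ⟨i, rfl⟩ := Fin.exists_succAbove_eq hx
    rw [ins_succAbove]
    have hsome : ∃ y, E (some i) = some y := by
      rcases h : E (some i) with _ | y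
      · exfalso
        have := E.injective (h.trans hEnone.symm)
        simp at this
      · exact ⟨y, rfl⟩
    have h1 : some (E.removeNone i) = E (some i) := Equiv.removeNone_some E hsome
    have h2 : E (some i) = finSuccEquivLast (π (j.succAbove i)) := by
      simp [hE, finSuccEquiv'_succAbove]
    rw [h2] at h1
    have := congrArg finSuccEquivLast.symm h1
    rw [Equiv.symm_apply_apply] at this
    rw [← this]
    simp [Equiv.symm_apply_eq, finSuccEquivLast_castSucc]

lemma val_succAbove (j : Fin (m+1)) (i : Fin m) :
    ((j.succAbove i : Fin (m+1)) : ℕ) = if (i:ℕ) < (j:ℕ) then (i:ℕ) else (i:ℕ)+1 := by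
  rw [Fin.succAbove]
  rcases lt_or_ge ((i:ℕ)) ((j:ℕ)) with h | h
  · rw [if_pos (by simpa [Fin.lt_def] using h), if_pos h]; rfl
  · rw [if_neg (by simpa [Fin.lt_def, not_lt] using h), if_neg (not_lt.mpr h)]; rfl

lemma desEndE_eq_zero_iff (σ : Perm (Fin m)) :
    desEndE m σ = 0 ↔ ∀ a b : Fin m, (b:ℕ) = (a:ℕ)+1 → σ b < σ a → ¬ Even ((σ b : ℕ)+1) := by
  unfold desEndE
  rw [Finset.card_eq_zero, Finset.filter_eq_empty_iff]
  constructor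
  · intro h a b hab hlt hev
    exact h (mem_univ (a,b)) ⟨hab, hlt, hev⟩
  · rintro h ⟨a,b⟩ _ ⟨hab, hlt, hev⟩
    exact h a b hab hlt hev

lemma desEndE_ins_eq_zero (j : Fin (m+1)) (σ : Perm (Fin m)) :
    desEndE (m+1) (ins j σ) = 0 ↔
      (desEndE m σ = 0 ∧ ∀ i : Fin m, (i:ℕ) = (j:ℕ) → Odd ((σ i : ℕ)+1)) := by
  rw [desEndE_eq_zero_iff, desEndE_eq_zero_iff]
  constructor
  · intro h
    constructor
    · intro a b hab hlt hev
      have hva := val_succAbove j a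
      have hvb := val_succAbove j b
      by_cases hadj : ((j.succAbove b : Fin (m+1)) : ℕ) = ((j.succAbove a : Fin (m+1)) : ℕ) + 1
      · refine h (j.succAbove a) (j.succAbove b) hadj ?_ ?_
        · rw [ins_succAbove, ins_succAbove]
          exact Fin.castSucc_lt_castSucc_iff.mpr hlt
        · rw [ins_succAbove]
          simpa using hev
      · have hb : ((j.succAbove b : Fin (m+1)) : ℕ) = (j:ℕ) + 1 := by
          split_ifs at hva hvb <;> omega
        refine h j (j.succAbove b) hb ?_ ?_
        · rw [ins_succAbove, ins_at]
          exact Fin.castSucc_lt_last _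
        · rw [ins_succAbove]
          simpa using hev
    · intro i hij
      have hvb := val_succAbove j i
      have hb : ((j.succAbove i : Fin (m+1)) : ℕ) = (j:ℕ) + 1 := by
        split_ifs at hvb <;> omega
      have := h j (j.succAbove i) hb
        (by rw [ins_succAbove, ins_at]; exact Fin.castSucc_lt_last _)
      rw [ins_succAbove] at this
      simp only [Fin.coe_castSucc] at this
      exact Nat.not_even_iff_odd.mp this
  · rintro ⟨hg, hj⟩ A B hAB hlt hev
    rcases eq_or_ne B j with rfl | hB
    · rw [ins_at] at hlt
      exact absurd hlt (not_lt.mpr (Fin.le_last _))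
    obtain ⟨ib, rfl⟩ := Fin.exists_succAbove_eq hB
    rw [ins_succAbove] at hlt hev
    have hvb := val_succAbove j ib
    rcases eq_or_ne A j with rfl | hA
    · have hib : (ib:ℕ) = (A:ℕ) := by split_ifs at hvb <;> omega
      have := hj ib hib
      simp only [Fin.coe_castSucc] at hev
      exact Nat.not_odd_iff_even.mpr hev this
    · obtain ⟨ia, rfl⟩ := Fin.exists_succAbove_eq hA
      rw [ins_succAbove] at hlt
      have hva := val_succAbove j ia
      have hja : ((j.succAbove ia : Fin (m+1)) : ℕ) ≠ (j:ℕ) := by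
        intro hc; exact hA (Fin.val_injective hc)
      have hib : (ib:ℕ) = (ia:ℕ) + 1 := by
        split_ifs at hva hvb <;> omega
      refine hg ia ib hib (Fin.castSucc_lt_castSucc_iff.mp hlt) ?_
      simpa using hev

lemma firstOdd_iff (hm : 0 < m) (σ : Perm (Fin m)) :
    firstOdd m σ ↔ Odd ((σ ⟨0, hm⟩ : ℕ) + 1) := by
  constructor
  · rintro ⟨i, hi, h⟩
    have : i = ⟨0, hm⟩ := Fin.ext hi
    rwa [this] at h
  · intro h; exact ⟨⟨0, hm⟩, rfl, h⟩

lemma firstEven_iff (hm : 0 < m) (σ : Perm (Fin m)) :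
    firstEven m σ ↔ Even ((σ ⟨0, hm⟩ : ℕ) + 1) := by
  constructor
  · rintro ⟨i, hi, h⟩
    have : i = ⟨0, hm⟩ := Fin.ext hi
    rwa [this] at h
  · intro h; exact ⟨⟨0, hm⟩, rfl, h⟩

lemma firstEven_iff_not (hm : 0 < m) (σ : Perm (Fin m)) :
    firstEven m σ ↔ ¬ firstOdd m σ := by
  rw [firstOdd_iff hm, firstEven_iff hm, ← Nat.not_odd_iff_even]

lemma ins_apply_zero_eq (j : Fin (m+1)) (σ : Perm (Fin m)) (hj : (j:ℕ) = 0) :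
    ins j σ ⟨0, Nat.succ_pos m⟩ = Fin.last m := by
  have : j = ⟨0, Nat.succ_pos m⟩ := Fin.ext hj
  rw [← this, ins_at]

lemma ins_apply_zero_ne (j : Fin (m+1)) (σ : Perm (Fin m)) (hj : (j:ℕ) ≠ 0) (hm : 0 < m) :
    ins j σ ⟨0, Nat.succ_pos m⟩ = (σ ⟨0, hm⟩).castSucc := by
  have h0 : (⟨0, Nat.succ_pos m⟩ : Fin (m+1)) = j.succAbove ⟨0, hm⟩ := by
    apply Fin.ext
    rw [val_succAbove, if_pos (show (0:ℕ) < (j:ℕ) by omega)]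
  rw [h0, ins_succAbove]

lemma firstOdd_ins (hm : 0 < m) (j : Fin (m+1)) (σ : Perm (Fin m)) :
    firstOdd (m+1) (ins j σ) ↔
      (((j:ℕ) = 0 ∧ Odd (m + 1)) ∨ ((j:ℕ) ≠ 0 ∧ firstOdd m σ)) := by
  rw [firstOdd_iff (Nat.succ_pos m), firstOdd_iff hm]
  by_cases hj : (j:ℕ) = 0
  · rw [ins_apply_zero_eq j σ hj]
    simp [hj, Fin.val_last]
  · rw [ins_apply_zero_ne j σ hj hm]
    simp [hj, Fin.coe_castSucc]

lemma firstEven_ins (hm : 0 < m) (j : Fin (m+1)) (σ : Perm (Fin m)) :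
    firstEven (m+1) (ins j σ) ↔
      (((j:ℕ) = 0 ∧ Even (m + 1)) ∨ ((j:ℕ) ≠ 0 ∧ firstEven m σ)) := by
  rw [firstEven_iff (Nat.succ_pos m), firstEven_iff hm]
  by_cases hj : (j:ℕ) = 0
  · rw [ins_apply_zero_eq j σ hj]
    simp [hj, Fin.val_last]
  · rw [ins_apply_zero_ne j σ hj hm]
    simp [hj, Fin.coe_castSucc]

lemma range_odd_card (m : ℕ) : ((Finset.range m).filter (fun v => Odd (v+1))).card = (m+1)/2 := by
  induction m with
  | zero => simp
  | succ k ih =>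
    rw [Finset.range_add_one, Finset.filter_insert]
    by_cases h : Odd (k+1)
    · rw [if_pos h, Finset.card_insert_of_notMem (by simp), ih]
      rw [Nat.odd_iff] at h; omega
    · rw [if_neg h, ih]
      rw [Nat.odd_iff] at h; omega

lemma odd_count (σ : Perm (Fin m)) :
    (∑ i : Fin m, if Odd ((σ i : ℕ)+1) then 1 else 0) = (m+1)/2 := by
  rw [← Finset.card_filter]
  rw [← range_odd_card m]
  apply Finset.card_bij (fun i _ => ((σ i : Fin m) : ℕ))
  · intro i hi
    simp only [Finset.mem_filter, Finset.mem_univ, true_and] at hi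
    simp [Finset.mem_filter, Finset.mem_range, (σ i).isLt, hi]
  · intro a ha b hb h
    exact σ.injective (Fin.val_injective h)
  · intro v hv
    simp only [Finset.mem_filter, Finset.mem_range] at hv
    refine ⟨σ.symm ⟨v, hv.1⟩, ?_, ?_⟩
    · simp [Finset.mem_filter, hv.2]
    · simp

lemma card_succ (P : Perm (Fin (m+1)) → Prop) [DecidablePred P] :
    (univ.filter P).card
      = ∑ σ : Perm (Fin m), (univ.filter (fun j : Fin (m+1) => P (ins j σ))).card := by
  have h1 : (univ.filter P).card
      = (univ.filter (fun p : Fin (m+1) × Perm (Fin m) => P (ins p.1 p.2))).card := by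
    rw [eq_comm]
    apply Finset.card_bij (fun p _ => ins p.1 p.2)
    · intro p hp
      simp only [Finset.mem_filter, Finset.mem_univ, true_and] at hp ⊢
      exact hp
    · intro p hp q hq h
      exact ins_injective h
    · intro π hπ
      obtain ⟨p, hp⟩ := ins_surjective π
      refine ⟨p, ?_, hp⟩
      simp only [Finset.mem_filter, Finset.mem_univ, true_and] at hπ ⊢
      have hp' : ins p.1 p.2 = π := hp
      rw [hp']; exact hπ
  rw [h1, Finset.card_filter, Fintype.sum_prod_type_right]
  exact Finset.sum_congr rfl (fun σ _ => (Finset.card_filter _ _).symm)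

lemma sum_ite_card {α : Type*} [Fintype α] (p : α → Prop) [DecidablePred p] (c : ℕ) :
    (∑ x : α, if p x then c else 0) = c * (univ.filter p).card := by
  rw [Finset.sum_ite, Finset.sum_const, Finset.sum_const_zero, add_zero, smul_eq_mul, mul_comm]

end Aux

section Recs

lemma rec_P0 (k : ℕ) :
    P0 0 (k+2) = ((k+2)/2 + if Odd (k+2) then 1 else 0) * P0 0 (k+1) := by
  have hm : 0 < k + 1 := Nat.succ_pos k
  have key : ∀ σ : Perm (Fin (k+1)),
      (univ.filter (fun j : Fin (k+2) =>
        firstOdd (k+2) (ins j σ) ∧ desEndE (k+2) (ins j σ) = 0)).card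
      = if firstOdd (k+1) σ ∧ desEndE (k+1) σ = 0
          then ((k+2)/2 + if Odd (k+2) then 1 else 0) else 0 := by
    intro σ
    rw [Finset.card_filter]
    have hpt : ∀ j : Fin (k+2),
        (firstOdd (k+2) (ins j σ) ∧ desEndE (k+2) (ins j σ) = 0) ↔
        ((((j:ℕ) = 0 ∧ Odd (k+2)) ∨ ((j:ℕ) ≠ 0 ∧ firstOdd (k+1) σ)) ∧
          (desEndE (k+1) σ = 0 ∧ ∀ i : Fin (k+1), (i:ℕ) = (j:ℕ) → Odd ((σ i : ℕ)+1))) := by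
      intro j
      rw [firstOdd_ins hm, desEndE_ins_eq_zero]
    simp only [hpt]
    rw [Fin.sum_univ_castSucc]
    simp only [Fin.coe_castSucc, Fin.val_last]
    have hJ : ∀ i : Fin (k+1),
        ((∀ i' : Fin (k+1), (i':ℕ) = (i:ℕ) → Odd ((σ i' : ℕ)+1)) ↔ Odd ((σ i : ℕ)+1)) := by
      intro i
      constructor
      · intro h; exact h i rfl
      · intro h i' hi'
        have : i' = i := Fin.ext hi'
        rwa [this]
    have hlast : ((if (((k+1:ℕ) = 0 ∧ Odd (k+2)) ∨ ((k+1:ℕ) ≠ 0 ∧ firstOdd (k+1) σ)) ∧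
          (desEndE (k+1) σ = 0 ∧ ∀ i : Fin (k+1), (i:ℕ) = (k+1:ℕ) → Odd ((σ i : ℕ)+1))
        then 1 else 0) : ℕ)
        = if firstOdd (k+1) σ ∧ desEndE (k+1) σ = 0 then 1 else 0 := by
      apply if_congr _ rfl rfl
      constructor
      · rintro ⟨h1, h2, _⟩
        rcases h1 with ⟨h, _⟩ | ⟨_, h⟩
        · omega
        · exact ⟨h, h2⟩
      · rintro ⟨h1, h2⟩
        exact ⟨Or.inr ⟨by omega, h1⟩, h2, fun i hi => absurd hi (by omega)⟩
    rw [hlast]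
    simp only [hJ]
    rw [Fin.sum_univ_succ]
    simp only [Fin.val_succ, Fin.val_zero]
    by_cases hgood : desEndE (k+1) σ = 0
    · by_cases hfo : firstOdd (k+1) σ
      · have hodd0 : Odd ((σ (0 : Fin (k+1)) : ℕ) + 1) :=
          (firstOdd_iff hm σ).mp hfo
        have hS := odd_count σ
        rw [Fin.sum_univ_succ, if_pos hodd0] at hS
        by_cases hO : Odd (k+2) <;>
          simp [hfo, hgood, hodd0, hO] at hS ⊢ <;> omega
      · have hnodd0 : ¬ Odd ((σ (0 : Fin (k+1)) : ℕ) + 1) :=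
          fun h => hfo ((firstOdd_iff hm σ).mpr h)
        simp [hgood, hfo, hnodd0]
    · simp [hgood]
  unfold P0
  rw [card_succ (m := k+1) (fun π => firstOdd (k+2) π ∧ desEndE (k+2) π = 0)]
  rw [Finset.sum_congr rfl (fun σ _ => key σ)]
  rw [sum_ite_card]

lemma rec_P1 (k : ℕ) :
    P1 0 (k+2) = (if Even (k+2) then 1 else 0) * P0 0 (k+1)
      + (1 + (k+2)/2) * P1 0 (k+1) := by
  have hm : 0 < k + 1 := Nat.succ_pos k
  have key : ∀ σ : Perm (Fin (k+1)),
      (univ.filter (fun j : Fin (k+2) =>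
        firstEven (k+2) (ins j σ) ∧ desEndE (k+2) (ins j σ) = 0)).card
      = if firstOdd (k+1) σ ∧ desEndE (k+1) σ = 0
          then (if Even (k+2) then 1 else 0)
          else if firstEven (k+1) σ ∧ desEndE (k+1) σ = 0
            then (1 + (k+2)/2) else 0 := by
    intro σ
    rw [Finset.card_filter]
    have hpt : ∀ j : Fin (k+2),
        (firstEven (k+2) (ins j σ) ∧ desEndE (k+2) (ins j σ) = 0) ↔
        ((((j:ℕ) = 0 ∧ Even (k+2)) ∨ ((j:ℕ) ≠ 0 ∧ firstEven (k+1) σ)) ∧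
          (desEndE (k+1) σ = 0 ∧ ∀ i : Fin (k+1), (i:ℕ) = (j:ℕ) → Odd ((σ i : ℕ)+1))) := by
      intro j
      rw [firstEven_ins hm, desEndE_ins_eq_zero]
    simp only [hpt]
    rw [Fin.sum_univ_castSucc]
    simp only [Fin.coe_castSucc, Fin.val_last]
    have hJ : ∀ i : Fin (k+1),
        ((∀ i' : Fin (k+1), (i':ℕ) = (i:ℕ) → Odd ((σ i' : ℕ)+1)) ↔ Odd ((σ i : ℕ)+1)) := by
      intro i
      constructor
      · intro h; exact h i rfl
      · intro h i' hi'
        have : i' = i := Fin.ext hi'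
        rwa [this]
    have hlast : ((if (((k+1:ℕ) = 0 ∧ Even (k+2)) ∨ ((k+1:ℕ) ≠ 0 ∧ firstEven (k+1) σ)) ∧
          (desEndE (k+1) σ = 0 ∧ ∀ i : Fin (k+1), (i:ℕ) = (k+1:ℕ) → Odd ((σ i : ℕ)+1))
        then 1 else 0) : ℕ)
        = if firstEven (k+1) σ ∧ desEndE (k+1) σ = 0 then 1 else 0 := by
      apply if_congr _ rfl rfl
      constructor
      · rintro ⟨h1, h2, _⟩
        rcases h1 with ⟨h, _⟩ | ⟨_, h⟩
        · omega
        · exact ⟨h, h2⟩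
      · rintro ⟨h1, h2⟩
        exact ⟨Or.inr ⟨by omega, h1⟩, h2, fun i hi => absurd hi (by omega)⟩
    rw [hlast]
    simp only [hJ]
    rw [Fin.sum_univ_succ]
    simp only [Fin.val_succ, Fin.val_zero]
    by_cases hgood : desEndE (k+1) σ = 0
    · by_cases hfo : firstOdd (k+1) σ
      · have hodd0 : Odd ((σ (0 : Fin (k+1)) : ℕ) + 1) :=
          (firstOdd_iff hm σ).mp hfo
        have hnfe : ¬ firstEven (k+1) σ := by
          rw [firstEven_iff_not hm]; exact not_not_intro hfo
        by_cases hE : Even (k+2) <;>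
          simp [hfo, hgood, hodd0, hnfe, hE]
      · have hnodd0 : ¬ Odd ((σ (0 : Fin (k+1)) : ℕ) + 1) :=
          fun h => hfo ((firstOdd_iff hm σ).mpr h)
        have hfe : firstEven (k+1) σ := (firstEven_iff_not hm σ).mpr hfo
        have hS := odd_count σ
        rw [Fin.sum_univ_succ, if_neg hnodd0] at hS
        simp [hfo, hgood, hnodd0, hfe] at hS ⊢
        omega
    · simp [hgood]
  unfold P1 P0
  rw [card_succ (m := k+1) (fun π => firstEven (k+2) π ∧ desEndE (k+2) π = 0)]
  rw [Finset.sum_congr rfl (fun σ _ => key σ)]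
  have split : ∀ σ : Perm (Fin (k+1)),
      (if firstOdd (k+1) σ ∧ desEndE (k+1) σ = 0
          then (if Even (k+2) then 1 else 0)
          else if firstEven (k+1) σ ∧ desEndE (k+1) σ = 0
            then (1 + (k+2)/2) else 0)
      = (if firstOdd (k+1) σ ∧ desEndE (k+1) σ = 0 then (if Even (k+2) then 1 else 0) else 0)
        + (if firstEven (k+1) σ ∧ desEndE (k+1) σ = 0 then (1 + (k+2)/2) else 0) := by
    intro σ
    by_cases hA : firstOdd (k+1) σ ∧ desEndE (k+1) σ = 0
    · have hnfe : ¬ (firstEven (k+1) σ ∧ desEndE (k+1) σ = 0) := by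
        rw [firstEven_iff_not hm]
        rintro ⟨h1, _⟩; exact h1 hA.1
      rw [if_pos hA, if_pos hA, if_neg hnfe, add_zero]
    · rw [if_neg hA, if_neg hA, zero_add]
  rw [Finset.sum_congr rfl (fun σ _ => split σ)]
  rw [Finset.sum_add_distrib, sum_ite_card, sum_ite_card]

lemma P0_one : P0 0 1 = 1 := by decide

lemma P1_one : P1 0 1 = 0 := by decide

lemma even_vals : ∀ n : ℕ, P0 0 (2*(n+1)) = (Nat.factorial (n+1))^2 ∧
    P1 0 (2*(n+1)) = (n+1) * (Nat.factorial (n+1))^2 := by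
  intro n
  induction n with
  | zero =>
    constructor
    · have h := rec_P0 0
      norm_num [P0_one] at h
      simpa [Nat.factorial] using h
    · have h := rec_P1 0
      norm_num [P0_one, P1_one] at h
      simpa [Nat.factorial] using h
  | succ t ih =>
    obtain ⟨ha, hb⟩ := ih
    -- odd step : m = 2t+3 = (2t+2)+1, from k = 2t+1
    have hoa := rec_P0 (2*t+1)
    have hob := rec_P1 (2*t+1)
    have hea := rec_P0 (2*t+2)
    have heb := rec_P1 (2*t+2)
    have e1 : 2*t+1+2 = 2*(t+1)+1 := by ring
    have e2 : 2*t+1+1 = 2*(t+1) := by ring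
    have e3 : 2*t+2+2 = 2*(t+2) := by ring
    have e4 : 2*t+2+1 = 2*(t+1)+1 := by ring
    rw [e1, e2] at hoa hob
    rw [e3, e4] at hea heb
    have podd : Odd (2*(t+1)+1) := ⟨t+1, by ring⟩
    have peven : Even (2*(t+2)) := ⟨t+2, by ring⟩
    have pnotodd : ¬ Odd (2*(t+2)) := by rw [Nat.odd_iff]; omega
    have pnoteven : ¬ Even (2*(t+1)+1) := by rw [Nat.even_iff]; omega
    rw [if_pos podd] at hoa
    rw [if_neg pnoteven] at hob
    rw [if_neg pnotodd] at hea
    rw [if_pos peven] at heb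
    have c1 : (2*(t+1)+1)/2 + 1 = t+2 := by omega
    have c2 : 1 + (2*(t+1)+1)/2 = t+2 := by omega
    have c3 : (2*(t+2))/2 + 0 = t+2 := by omega
    have c4 : 1 + (2*(t+2))/2 = t+3 := by omega
    rw [c1, ha] at hoa
    rw [c2, hb] at hob
    rw [c3] at hea
    rw [c4, one_mul] at heb
    constructor
    · rw [hea, hoa, Nat.factorial_succ (t+1)]; ring
    · rw [heb, hoa, hob, Nat.factorial_succ (t+1)]; ring

end Recs

theorem stmt_7 (n : ℕ) (hn : 1 ≤ n) :
    P0 0 (2*n) = (Nat.factorial n)^2 ∧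
    P1 0 (2*n) = n * (Nat.factorial n)^2 ∧
    P0 0 (2*n+1) = Nat.factorial n * Nat.factorial (n+1) ∧
    P1 0 (2*n+1) = n * (Nat.factorial n * Nat.factorial (n+1)) := by
  obtain ⟨t, rfl⟩ : ∃ t, n = t + 1 := ⟨n-1, by omega⟩
  obtain ⟨ha, hb⟩ := even_vals t
  have hoa := rec_P0 (2*t+1)
  have hob := rec_P1 (2*t+1)
  have e1 : 2*t+1+2 = 2*(t+1)+1 := by ring
  have e2 : 2*t+1+1 = 2*(t+1) := by ring
  rw [e1, e2] at hoa hob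
  have podd : Odd (2*(t+1)+1) := ⟨t+1, by ring⟩
  have pnoteven : ¬ Even (2*(t+1)+1) := by rw [Nat.even_iff]; omega
  rw [if_pos podd] at hoa
  rw [if_neg pnoteven] at hob
  have c1 : (2*(t+1)+1)/2 + 1 = t+2 := by omega
  have c2 : 1 + (2*(t+1)+1)/2 = t+2 := by omega
  rw [c1, ha] at hoa
  rw [c2, hb] at hob
  refine ⟨ha, hb, ?_, ?_⟩
  · rw [hoa, Nat.factorial_succ (t+1)]; ring
  · rw [hob, ha, Nat.factorial_succ (t+1)]; ring

end DescentParity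
end
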